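/- Let R be a Cohen-Macaulay local domain and let I = (f_1, ..., f_r) be an ideal generated by a regular sequence of length r (a complete intersection of codimension r). Then the kernel of the canonical surjection from the polynomial ring S = R[T_1, ..., T_r] onto the Rees algebra of I (sending T_i to f_i t) is generated by the 2x2 minors G_{ij} = f_i T_j - f_j T_i of the 2xr matrix with rows (f_1,...,f_r) and (T_1,...,T_r). -/

import Mathlib

/-!
A form `F` of degree `d` lies in the kernel of the Rees map iff `F(f) = 0`, so it suffices to show
that every such relation is a combination of the Koszul relations `fᵢ Tⱼ - fⱼ Tᵢ`; we induct on
the length of the sequence. Write `I'` for the ideal of `f' = (f₁, …, f_{r-1})` and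
`F = G(T₁, …, T_{r-1}) + T_r H`. By induction the Koszul relations present the form ring of `I'`,
which makes `f'` quasi-regular (`I'ⁿ / I'ⁿ⁺¹ ≅ (R ⧸ I')[T]ₙ`), so `f_r`, a nonzerodivisor modulo
`I'`, is one modulo every `I'ⁿ`. Since `f_r · (-H(f)) = G(f') ∈ I'ᵈ`, we get `-H(f) = K(f')` with
`K` a form of degree `d`. Then `G - f_r K` is a Koszul relation of `f'`, and `f_r K ≡ T_r K'`
modulo Koszul relations, so `F ≡ T_r (K' + H)`. As `f_r ≠ 0` in the domain `R`, `K' + H` is a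
relation of degree `d - 1`, and an induction on `d` finishes the proof.
-/

open MvPolynomial

/-- The canonical `R`-algebra map `R[T₁,…,T_r] → R[t]` sending `Tᵢ` to `fᵢ·t`.
Its image is the Rees algebra of the ideal `I = (f₁,…,f_r)` and its kernel is the
defining ideal of the Rees algebra. -/
noncomputable def reesKernelMap {R : Type*} [CommRing R] {r : ℕ} (f : Fin r → R) :
    MvPolynomial (Fin r) R →ₐ[R] Polynomial R :=
  MvPolynomial.aeval fun i => Polynomial.C (f i) * Polynomial.X

/-- A Cohen–Macaulay local ring: there is a regular sequence contained in the maximal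
ideal whose length equals the Krull dimension of the ring. -/
def IsCohenMacaulayLocalRing (R : Type*) [CommRing R] [IsLocalRing R] : Prop :=
  ∃ rs : List R, (∀ x ∈ rs, x ∈ IsLocalRing.maximalIdeal R) ∧
    RingTheory.Sequence.IsRegular R rs ∧ (rs.length : WithBot (WithTop ℕ)) = ringKrullDim R

theorem Ideal.ofList_ofFn {R : Type*} [CommRing R] {r : ℕ} (f : Fin r → R) :
    Ideal.ofList (List.ofFn f) = Ideal.span (Set.range f) := by
  simp only [Ideal.ofList, List.mem_ofFn', Set.ofPred_mem_eq]

theorem Ideal.ofList_ofFn_smul_top {R : Type*} [CommRing R] {r : ℕ} (f : Fin r → R) :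
    (Ideal.ofList (List.ofFn f) • ⊤ : Submodule R R) = Ideal.span (Set.range f) := by
  rw [Ideal.ofList_ofFn, Ideal.smul_eq_mul, Ideal.mul_top]

namespace RingTheory.Sequence.IsRegular

variable {R : Type*} [CommRing R]

theorem span_range_ne_top {r : ℕ} {f : Fin r → R} (h : IsRegular R (List.ofFn f)) :
    Ideal.span (Set.range f) ≠ ⊤ :=
  fun htop => h.top_ne_smul (by rw [Ideal.ofList_ofFn_smul_top, htop])

variable {r : ℕ} {f : Fin (r + 1) → R}
  (h : IsRegular R (List.ofFn f))
include h

theorem ofFn_castSucc : IsRegular R (List.ofFn (f ∘ Fin.castSucc)) := by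
  have hw := h.toIsWeaklyRegular
  rw [List.ofFn_succ', List.concat_eq_append, isWeaklyRegular_append_iff] at hw
  refine ⟨hw.1, fun htop => h.span_range_ne_top (top_unique ?_)⟩
  rw [Ideal.ofList_ofFn_smul_top] at htop
  exact htop.le.trans (Ideal.span_mono (Set.range_comp_subset_range _ _))

theorem mem_of_last_mul_mem {x : R}
    (hx : f (Fin.last r) * x ∈ Ideal.span (Set.range (f ∘ Fin.castSucc))) :
    x ∈ Ideal.span (Set.range (f ∘ Fin.castSucc)) := by
  have hw := h.toIsWeaklyRegular
  rw [List.ofFn_succ', List.concat_eq_append, isWeaklyRegular_append_iff,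
    isWeaklyRegular_singleton_iff, Ideal.ofList_ofFn_smul_top] at hw
  exact mem_of_isSMulRegular_quotient_of_smul_mem hw.2 hx

theorem last_ne_zero : f (Fin.last r) ≠ 0 := by
  intro h0
  refine h.ofFn_castSucc.span_range_ne_top ((Ideal.eq_top_iff_one _).mpr ?_)
  exact h.mem_of_last_mul_mem (by rw [h0, zero_mul]; exact zero_mem _)

end RingTheory.Sequence.IsRegular

namespace MvPolynomial

variable {σ R : Type*} [CommRing R]

noncomputable def koszulIdeal (f : σ → R) : Ideal (MvPolynomial σ R) :=
  Ideal.span {g | ∃ i j, g = C (f i) * X j - C (f j) * X i}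

theorem koszulIdeal_le_ker_aeval {A : Type*} [CommRing A] [Algebra R A] (f : σ → R) (g : σ → A)
    (hg : ∀ i j, algebraMap R A (f i) * g j = algebraMap R A (f j) * g i) :
    koszulIdeal f ≤ RingHom.ker (aeval g) := by
  rw [koszulIdeal, Ideal.span_le]
  rintro _ ⟨i, j, rfl⟩
  simp [hg i j]

theorem eval_eq_zero_of_mem_koszulIdeal {f : σ → R} {P : MvPolynomial σ R}
    (hP : P ∈ koszulIdeal f) : eval f P = 0 := by
  rw [← coe_aeval_eq_eval]
  exact koszulIdeal_le_ker_aeval f f (fun i j => mul_comm _ _) hP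

theorem coeff_mem_span_of_mem_koszulIdeal {f : σ → R} {P : MvPolynomial σ R}
    (hP : P ∈ koszulIdeal f) (m : σ →₀ ℕ) : coeff m P ∈ Ideal.span (Set.range f) := by
  have hle : koszulIdeal f ≤ (Ideal.span (Set.range f)).map C := by
    rw [koszulIdeal, Ideal.span_le]
    rintro _ ⟨i, j, rfl⟩
    have hC : ∀ k, C (f k) ∈ (Ideal.span (Set.range f)).map (C : R →+* MvPolynomial σ R) :=
      fun k => Ideal.mem_map_of_mem _ (Ideal.subset_span ⟨k, rfl⟩)
    exact sub_mem (Ideal.mul_mem_right _ _ (hC i)) (Ideal.mul_mem_right _ _ (hC j))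
  exact mem_map_C_iff.mp (hle hP) m

theorem map_rename_koszulIdeal_le {τ : Type*} (f : τ → R) (g : σ → τ) :
    (koszulIdeal (f ∘ g)).map (rename (R := R) g) ≤ koszulIdeal f := by
  rw [koszulIdeal, Ideal.map_span, Ideal.span_le]
  rintro _ ⟨_, ⟨i, j, rfl⟩, rfl⟩
  exact Ideal.subset_span ⟨g i, g j, by simp⟩

attribute [local instance] gradedAlgebra in
theorem IsHomogeneous.homogeneousComponent_add_mul {m : ℕ} {φ : MvPolynomial σ R}
    (hφ : φ.IsHomogeneous m) (n : ℕ) (p : MvPolynomial σ R) :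
    homogeneousComponent (m + n) (φ * p) = φ * homogeneousComponent n p := by
  rw [← decomposition.decompose'_apply, ← decomposition.decompose'_apply]
  exact DirectSum.coe_decompose_mul_add_of_left_mem _ ((mem_homogeneousSubmodule _ _).mpr hφ)

theorem IsHomogeneous.exists_eq_sum_X_mul [Fintype σ] {d : ℕ} {F : MvPolynomial σ R}
    (hF : F.IsHomogeneous (d + 1)) :
    ∃ H : σ → MvPolynomial σ R, (∀ i, (H i).IsHomogeneous d) ∧ F = ∑ i, X i * H i := by
  have hmem : F ∈ Submodule.span R (Set.range X) * homogeneousSubmodule σ R d := by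
    rw [← homogeneousSubmodule_one_eq_span_X,
      ← homogeneousSubmodule_one_pow (σ := σ) (R := R) d, ← pow_succ', homogeneousSubmodule_one_pow]
    exact hF
  clear hF
  induction hmem using Submodule.mul_induction_on' with
  | mem_mul_mem x hx y hy =>
    obtain ⟨c, rfl⟩ := (Submodule.mem_span_range_iff_exists_fun R).mp hx
    refine ⟨fun i => c i • y, fun i => Submodule.smul_mem _ _ hy, ?_⟩
    simp [Finset.sum_mul]
  | add x _ y _ hx hy =>
    obtain ⟨Hx, hHx, rfl⟩ := hx
    obtain ⟨Hy, hHy, rfl⟩ := hy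
    exact ⟨Hx + Hy, fun i => (hHx i).add (hHy i), by simp [mul_add, Finset.sum_add_distrib]⟩

theorem IsHomogeneous.eval_mem_span_pow_succ {f : σ → R} {d : ℕ} {F : MvPolynomial σ R}
    (hF : F.IsHomogeneous d) (hc : ∀ m, coeff m F ∈ Ideal.span (Set.range f)) :
    eval f F ∈ Ideal.span (Set.range f) ^ (d + 1) := by
  rw [F.as_sum, map_sum]
  refine Ideal.sum_mem _ fun m hm => ?_
  have hdeg : m.degree = d := (hF.degree_eq_sum_deg_support hm).symm
  rw [← mul_one (coeff m F), ← C_mul_monomial, map_mul, eval_C, pow_succ']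
  exact Ideal.mul_mem_mul (hc m)
    ((Ideal.mem_span_pow_iff_exists_isHomogeneous f _).mpr ⟨_, isHomogeneous_monomial _ hdeg, rfl⟩)

/-- `F'` is `F` with one variable `X i` of each monomial replaced by `f i`. -/
theorem IsHomogeneous.exists_contraction [Fintype σ] (f : σ → R) {d : ℕ} {F : MvPolynomial σ R}
    (hF : F.IsHomogeneous (d + 1)) :
    ∃ F' : MvPolynomial σ R, F'.IsHomogeneous d ∧ eval f F' = eval f F ∧
      (∀ m, coeff m F' ∈ Ideal.span (Set.range f)) ∧
      ∀ i, C (f i) * F - X i * F' ∈ koszulIdeal f := by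
  obtain ⟨H, hH, rfl⟩ := hF.exists_eq_sum_X_mul
  refine ⟨∑ i, C (f i) * H i, .sum _ _ _ fun i _ => (hH i).C_mul (f i), by simp [mul_comm],
    fun m => ?_, fun i₀ => ?_⟩
  · rw [coeff_sum]
    refine Ideal.sum_mem _ fun i _ => ?_
    rw [coeff_C_mul]
    exact Ideal.mul_mem_right _ _ (Ideal.subset_span ⟨i, rfl⟩)
  · have : C (f i₀) * ∑ i, X i * H i - X i₀ * ∑ i, C (f i) * H i
        = ∑ i, H i * (C (f i₀) * X i - C (f i) * X i₀) := by
      simp only [Finset.mul_sum, ← Finset.sum_sub_distrib]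
      exact Finset.sum_congr rfl fun i _ => by ring
    rw [this]
    exact Ideal.sum_mem _ fun i _ => Ideal.mul_mem_left _ _ (Ideal.subset_span ⟨i₀, i, rfl⟩)

def HomogeneousRelationsAreKoszul (f : σ → R) : Prop :=
  ∀ ⦃n : ℕ⦄ ⦃F : MvPolynomial σ R⦄, F.IsHomogeneous n → eval f F = 0 → F ∈ koszulIdeal f

namespace HomogeneousRelationsAreKoszul

variable [Fintype σ] {f : σ → R} (hA : HomogeneousRelationsAreKoszul f)
include hA

/-- Quasi-regularity: `I ^ n / I ^ (n + 1)` is the degree-`n` part of `(R ⧸ I)[X]`. -/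
theorem coeff_mem_span_of_eval_mem_span_pow_succ {n : ℕ} {F : MvPolynomial σ R}
    (hF : F.IsHomogeneous n) (hev : eval f F ∈ Ideal.span (Set.range f) ^ (n + 1))
    (m : σ →₀ ℕ) : coeff m F ∈ Ideal.span (Set.range f) := by
  obtain ⟨G, hG, hGF⟩ := (Ideal.mem_span_pow_iff_exists_isHomogeneous f _).mp hev
  obtain ⟨G', hG', hG'G, hG'coeff, -⟩ := hG.exists_contraction f
  have hdiff : F - G' ∈ koszulIdeal f := hA (hF.sub hG') (by rw [map_sub, hG'G, hGF, sub_self])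
  simpa using add_mem (coeff_mem_span_of_mem_koszulIdeal hdiff m) (hG'coeff m)

theorem mem_span_pow_of_mul_mem {a : R}
    (ha : ∀ x, a * x ∈ Ideal.span (Set.range f) → x ∈ Ideal.span (Set.range f)) :
    ∀ (d : ℕ) {x : R}, a * x ∈ Ideal.span (Set.range f) ^ d → x ∈ Ideal.span (Set.range f) ^ d
  | 0, _, _ => by simp
  | d + 1, x, hx => by
    obtain ⟨F, hF, rfl⟩ := (Ideal.mem_span_pow_iff_exists_isHomogeneous f x).mp
      (mem_span_pow_of_mul_mem ha d (Ideal.pow_le_pow_right d.le_succ hx))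
    refine hF.eval_mem_span_pow_succ fun m => ha _ ?_
    rw [← coeff_C_mul]
    exact hA.coeff_mem_span_of_eval_mem_span_pow_succ (hF.C_mul a) (by simpa using hx) m

end HomogeneousRelationsAreKoszul

section LastVariable

variable {r : ℕ}

theorem exists_eq_rename_castSucc_add_X_last_mul (F : MvPolynomial (Fin (r + 1)) R) :
    ∃ G H, F = rename Fin.castSucc G + X (Fin.last r) * H := by
  induction F using MvPolynomial.induction_on with
  | C a => exact ⟨C a, 0, by simp⟩
  | add p q hp hq =>
    obtain ⟨Gp, Hp, rfl⟩ := hp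
    obtain ⟨Gq, Hq, rfl⟩ := hq
    exact ⟨Gp + Gq, Hp + Hq, by rw [map_add]; ring⟩
  | mul_X p i hp =>
    obtain ⟨G, H, rfl⟩ := hp
    induction i using Fin.lastCases with
    | last => exact ⟨0, rename Fin.castSucc G + X (Fin.last r) * H, by rw [map_zero]; ring⟩
    | cast j => exact ⟨G * X j, H * X j.castSucc, by rw [map_mul, rename_X]; ring⟩

theorem IsHomogeneous.exists_eq_rename_castSucc_add_X_last_mul {d : ℕ}
    {F : MvPolynomial (Fin (r + 1)) R} (hF : F.IsHomogeneous (d + 1)) :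
    ∃ G H, G.IsHomogeneous (d + 1) ∧ H.IsHomogeneous d ∧
      F = rename Fin.castSucc G + X (Fin.last r) * H := by
  obtain ⟨G, H, hGH⟩ := MvPolynomial.exists_eq_rename_castSucc_add_X_last_mul F
  refine ⟨homogeneousComponent (d + 1) G, homogeneousComponent d H,
    homogeneousComponent_isHomogeneous _ _, homogeneousComponent_isHomogeneous _ _, ?_⟩
  rw [rename_homogeneousComponent, ← (isHomogeneous_X R _).homogeneousComponent_add_mul,
    add_comm 1, ← map_add, ← hGH, homogeneousComponent_eq_self hF]

namespace HomogeneousRelationsAreKoszul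

variable {f : Fin (r + 1) → R} (hA : HomogeneousRelationsAreKoszul (f ∘ Fin.castSucc))
  (ha : ∀ x, f (Fin.last r) * x ∈ Ideal.span (Set.range (f ∘ Fin.castSucc)) →
    x ∈ Ideal.span (Set.range (f ∘ Fin.castSucc)))
include hA ha

theorem exists_sub_X_last_mul_mem_koszulIdeal {d : ℕ} {F : MvPolynomial (Fin (r + 1)) R}
    (hF : F.IsHomogeneous (d + 1)) (hev : eval f F = 0) :
    ∃ H, H.IsHomogeneous d ∧ F - X (Fin.last r) * H ∈ koszulIdeal f := by
  obtain ⟨G, H, hG, hH, rfl⟩ := hF.exists_eq_rename_castSucc_add_X_last_mul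
  set a := f (Fin.last r)
  have hGH : a * -eval f H = eval (f ∘ Fin.castSucc) G := by
    rw [map_add, map_mul, eval_X, eval_rename] at hev
    linear_combination -hev
  obtain ⟨K, hK, hKH⟩ := (Ideal.mem_span_pow_iff_exists_isHomogeneous _ _).mp
    (hA.mem_span_pow_of_mul_mem ha (d + 1)
      (hGH ▸ (Ideal.mem_span_pow_iff_exists_isHomogeneous _ _).mpr ⟨G, hG, rfl⟩))
  have hGK : G - C a * K ∈ koszulIdeal (f ∘ Fin.castSucc) :=
    hA (hG.sub (hK.C_mul a)) (by rw [map_sub, map_mul, eval_C, hKH, hGH, sub_self])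
  obtain ⟨K', hK', -, -, hK'K⟩ := hK.rename_isHomogeneous.exists_contraction f
  refine ⟨K' + H, hK'.add hH, ?_⟩
  have hsplit : rename Fin.castSucc G + X (Fin.last r) * H - X (Fin.last r) * (K' + H) =
      rename Fin.castSucc (G - C a * K) +
        (C a * rename Fin.castSucc K - X (Fin.last r) * K') := by
    rw [map_sub, map_mul, rename_C]
    ring
  rw [hsplit]
  exact add_mem (map_rename_koszulIdeal_le f Fin.castSucc (Ideal.mem_map_of_mem _ hGK)) (hK'K _)

theorem of_castSucc (hlast : IsLeftRegular (f (Fin.last r))) :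
    HomogeneousRelationsAreKoszul f := by
  intro n
  induction n with
  | zero =>
    intro F hF hev
    have hC := totalDegree_eq_zero_iff_eq_C.mp (Nat.le_zero.mp hF.totalDegree_le)
    rw [hC, eval_C] at hev
    rw [hC, hev, map_zero]
    exact zero_mem _
  | succ d ih =>
    intro F hF hev
    obtain ⟨H, hH, hFH⟩ := hA.exists_sub_X_last_mul_mem_koszulIdeal ha hF hev
    have hH0 : eval f H = 0 := by
      have := eval_eq_zero_of_mem_koszulIdeal hFH
      rw [map_sub, map_mul, eval_X, hev, zero_sub, neg_eq_zero, ← mul_zero (f _)] at this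
      exact hlast this
    simpa using add_mem hFH (Ideal.mul_mem_left _ (X (Fin.last r)) (ih hH hH0))

end HomogeneousRelationsAreKoszul

end LastVariable

theorem homogeneousRelationsAreKoszul_of_isRegular [IsDomain R] :
    ∀ {r : ℕ} {f : Fin r → R}, RingTheory.Sequence.IsRegular R (List.ofFn f) →
      HomogeneousRelationsAreKoszul f
  | 0, f, _ => fun _ F _ hev => by
    have hC := eq_C_of_isEmpty F
    rw [hC, eval_C] at hev
    rw [hC, hev, map_zero]
    exact zero_mem _
  | _ + 1, _, h => .of_castSucc (homogeneousRelationsAreKoszul_of_isRegular h.ofFn_castSucc)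
    (fun _ => h.mem_of_last_mul_mem) (IsRegular.of_ne_zero h.last_ne_zero).left

section Rees

variable {r : ℕ} (f : Fin r → R)

theorem reesKernelMap_monomial (m : Fin r →₀ ℕ) (c : R) :
    reesKernelMap f (monomial m c) = Polynomial.monomial m.degree (eval f (monomial m c)) := by
  simp only [reesKernelMap, aeval_monomial, eval_monomial, Finsupp.prod, mul_pow,
    Finset.prod_mul_distrib, Finset.prod_pow_eq_pow_sum, Finsupp.degree_apply,
    ← Polynomial.C_mul_X_pow_eq_monomial, map_mul, map_prod, map_pow, Polynomial.algebraMap_eq]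
  ring

theorem coeff_reesKernelMap (P : MvPolynomial (Fin r) R) (n : ℕ) :
    (reesKernelMap f P).coeff n = eval f (homogeneousComponent n P) := by
  induction P using MvPolynomial.induction_on' with
  | monomial m c =>
    rw [reesKernelMap_monomial, Polynomial.coeff_monomial,
      homogeneousComponent_of_mem (isHomogeneous_monomial c rfl)]
    split_ifs <;> simp_all
  | add p q hp hq => simp [hp, hq]

theorem ker_reesKernelMap (hA : HomogeneousRelationsAreKoszul f) :
    RingHom.ker (reesKernelMap f).toRingHom = koszulIdeal f := by
  refine le_antisymm (fun P hP => ?_) ?_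
  · rw [← sum_homogeneousComponent P]
    refine sum_mem fun n _ => hA (homogeneousComponent_isHomogeneous n P) ?_
    rw [← coeff_reesKernelMap, show reesKernelMap f P = 0 from hP, Polynomial.coeff_zero]
  · refine koszulIdeal_le_ker_aeval f _ fun i j => ?_
    simp only [Polynomial.algebraMap_eq]
    ring

end Rees

end MvPolynomial

theorem stmt0_general {R : Type*} [CommRing R] [IsDomain R] {r : ℕ} (f : Fin r → R)
    (hreg : RingTheory.Sequence.IsRegular R (List.ofFn f)) :
    RingHom.ker (reesKernelMap f).toRingHom =
      Ideal.span { g : MvPolynomial (Fin r) R |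
        ∃ i j : Fin r, g = MvPolynomial.C (f i) * MvPolynomial.X j
          - MvPolynomial.C (f j) * MvPolynomial.X i } :=
  ker_reesKernelMap f (homogeneousRelationsAreKoszul_of_isRegular hreg)

/-- If `R` is a Cohen–Macaulay local domain and `I = (f₁,…,f_r)` is a complete intersection
ideal of codimension `r` (i.e. generated by a regular sequence of length `r`), then the
defining ideal of the Rees algebra of `I`, i.e. the kernel of the canonical surjection
`R[T₁,…,T_r] → Rees(I)`, is generated by the elements `G_{ij} = fᵢ Tⱼ - fⱼ Tᵢ`. -/
theorem stmt0 {R : Type*} [CommRing R] [IsNoetherianRing R] [IsLocalRing R] [IsDomain R]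
    (hCM : IsCohenMacaulayLocalRing R) {r : ℕ} (f : Fin r → R)
    (hreg : RingTheory.Sequence.IsRegular R (List.ofFn f)) :
    RingHom.ker (reesKernelMap f).toRingHom =
      Ideal.span { g : MvPolynomial (Fin r) R |
        ∃ i j : Fin r, g = MvPolynomial.C (f i) * MvPolynomial.X j
          - MvPolynomial.C (f j) * MvPolynomial.X i } :=
  stmt0_general f hreg
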